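/- arXiv:2009.04831 — 2 statements merged into one kernel-verified Lean document; each statement's English description precedes it below -/
import Mathlib

section
/- Let Kₙ be the complete graph on n ≥ 1 vertices and let G₂ be a finite graph with at least one vertex. Then κ(Kₙ∘G₂) = (n−1)·|V(G₂)| + κ(G₂). -/
/-! In `Kₙ ∘ G₂` any two vertices in different copies of `G₂` are adjacent, so deleting a vertex
set can only disconnect the graph (or leave a single vertex) if what survives lies inside one
copy `{i} × V(G₂)`. Hence the vertex-cuts of `Kₙ ∘ G₂` are exactly the sets consisting of all
other copies together with a vertex-cut of the copy `i`, and a smallest one has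
`(n − 1)·|V(G₂)| + κ(G₂)` vertices. -/

/-- The lexicographic product of two simple graphs: `(x₁,y₁)` is adjacent to `(x₂,y₂)`
iff `x₁x₂` is an edge of `G`, or `x₁ = x₂` and `y₁y₂` is an edge of `H`. -/
def lexProd {V W : Type*} (G : SimpleGraph V) (H : SimpleGraph W) :
    SimpleGraph (V × W) where
  Adj p q := G.Adj p.1 q.1 ∨ (p.1 = q.1 ∧ H.Adj p.2 q.2)
  symm := ⟨by
    rintro ⟨x₁, y₁⟩ ⟨x₂, y₂⟩ (h | ⟨rfl, h⟩)
    · exact Or.inl h.symm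
    · exact Or.inr ⟨rfl, h.symm⟩⟩
  loopless := ⟨by
    rintro ⟨x, y⟩ (h | ⟨-, h⟩)
    · exact G.irrefl h
    · exact H.irrefl h⟩

/-- The set `V₀(G)` of isolated vertices of `G`. -/
def isoSet {V : Type*} (G : SimpleGraph V) : Set V := {v | ∀ w, ¬ G.Adj v w}

/-- The set of vertices of `G − S` that are isolated in `G − S`,
i.e. `V₀(G − S)` regarded as a subset of the vertices of `G`. -/
def isolatedAfter {V : Type*} (G : SimpleGraph V) (S : Set V) : Set V :=
  {v | v ∉ S ∧ ∀ w ∉ S, ¬ G.Adj v w}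

/-- `S` is a vertex-cut of `G`: deleting `S` leaves a disconnected graph, or reduces `G`
to the trivial one-vertex graph `K₁`. -/
def IsVertexCut {V : Type*} (G : SimpleGraph V) (S : Set V) : Prop :=
  (Sᶜ.Nonempty ∧ ¬ (G.induce Sᶜ).Connected) ∨ (∃ v, Sᶜ = {v})

/-- The connectivity `κ(G)`: the minimum cardinality of a vertex-cut of `G`. -/
noncomputable def graphConnectivity {V : Type*} (G : SimpleGraph V) : ℕ :=
  sInf {n | ∃ S : Set V, IsVertexCut G S ∧ S.ncard = n}

/-- A minimum vertex-cut: a vertex-cut of cardinality `κ(G)`. -/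
def IsMinVertexCut {V : Type*} (G : SimpleGraph V) (S : Set V) : Prop :=
  IsVertexCut G S ∧ S.ncard = graphConnectivity G

/-- A k₁-vertex-cut: a vertex-cut `S` such that `G − S` has no isolated vertices. -/
def IsK1VertexCut {V : Type*} (G : SimpleGraph V) (S : Set V) : Prop :=
  IsVertexCut G S ∧ ∀ v ∉ S, ∃ w ∉ S, G.Adj v w

/-- The k₁-connectivity `k₁(G)`, valued in `ℕ∞`; it is `⊤` (infinity) if `G`
has no k₁-vertex-cut. -/
noncomputable def k1Connectivity {V : Type*} (G : SimpleGraph V) : ℕ∞ :=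
  sInf {n : ℕ∞ | ∃ S : Set V, IsK1VertexCut G S ∧ (S.ncard : ℕ∞) = n}

/-- `G` is super connected if every minimum vertex-cut isolates a vertex,
i.e. some vertex of `G − S` has no neighbours in `G − S`. -/
def SuperConnected {V : Type*} (G : SimpleGraph V) : Prop :=
  ∀ S : Set V, IsMinVertexCut G S → ∃ v ∉ S, ∀ w ∉ S, ¬ G.Adj v w

section Connectivity

variable {V V' : Type*} {G : SimpleGraph V}

lemma graphConnectivity_le {S : Set V} (h : IsVertexCut G S) : graphConnectivity G ≤ S.ncard :=
  Nat.sInf_le ⟨S, h, rfl⟩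

lemma exists_isVertexCut_ncard_eq_graphConnectivity [Nonempty V] (G : SimpleGraph V) :
    ∃ S, IsVertexCut G S ∧ S.ncard = graphConnectivity G := by
  obtain ⟨v⟩ := ‹Nonempty V›
  exact Nat.sInf_mem (s := {n | ∃ S : Set V, IsVertexCut G S ∧ S.ncard = n})
    ⟨_, {v}ᶜ, Or.inr ⟨v, compl_compl _⟩, rfl⟩

lemma le_graphConnectivity [Nonempty V] {m : ℕ} (h : ∀ S, IsVertexCut G S → m ≤ S.ncard) :
    m ≤ graphConnectivity G := by
  obtain ⟨S, hS, hcard⟩ := exists_isVertexCut_ncard_eq_graphConnectivity G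
  exact hcard ▸ h S hS

lemma isVertexCut_iff_of_iso {G' : SimpleGraph V'} {S : Set V} {S' : Set V'}
    (e : G.induce Sᶜ ≃g G'.induce S'ᶜ) : IsVertexCut G S ↔ IsVertexCut G' S' := by
  have hcard : Sᶜ.ncard = S'ᶜ.ncard := by
    rw [← Nat.card_coe_set_eq, ← Nat.card_coe_set_eq]
    exact Nat.card_congr e.toEquiv
  simp only [IsVertexCut, ← Set.nonempty_coe_sort, e.connected_iff, ← Set.ncard_eq_one, hcard,
    e.toEquiv.nonempty_congr]

end Connectivity

section LexProd

variable {V W : Type*} (G : SimpleGraph V) (H : SimpleGraph W)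

def lexProdColumnIso (i : V) (U : Set W) : (lexProd G H).induce ({i} ×ˢ U) ≃g H.induce U where
  toFun p := ⟨p.1.2, p.2.2⟩
  invFun w := ⟨(i, w.1), rfl, w.2⟩
  left_inv := by rintro ⟨⟨_, _⟩, rfl, _⟩; rfl
  right_inv _ := rfl
  map_rel_iff' := by
    rintro ⟨⟨_, _⟩, hp, _⟩ ⟨⟨_, _⟩, hq, _⟩
    rw [Set.mem_singleton_iff] at hp hq
    subst hp hq
    simp [lexProd]

lemma isVertexCut_lexProd_compl_singleton_prod_compl (i : V) (T : Set W) :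
    IsVertexCut (lexProd G H) ({i} ×ˢ Tᶜ)ᶜ ↔ IsVertexCut H T :=
  isVertexCut_iff_of_iso (by rw [compl_compl]; exact lexProdColumnIso G H i Tᶜ)

variable {G H}

lemma connected_induce_lexProd_top {S : Set (V × W)} {a b : V × W} (ha : a ∉ S) (hb : b ∉ S)
    (hab : a.1 ≠ b.1) : ((lexProd (⊤ : SimpleGraph V) H).induce Sᶜ).Connected := by
  have hadj (u v : ↥Sᶜ) (h : u.1.1 ≠ v.1.1) : ((lexProd ⊤ H).induce Sᶜ).Adj u v := Or.inl h
  refine (SimpleGraph.connected_iff _).2 ⟨fun u v => ?_, ⟨⟨a, ha⟩⟩⟩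
  by_cases huv : u.1.1 = v.1.1
  · -- Route through whichever of `a`, `b` lies outside the common column of `u` and `v`.
    obtain ⟨c, hc⟩ : ∃ c : ↥Sᶜ, c.1.1 ≠ u.1.1 := by
      by_cases hau : a.1 = u.1.1
      · exact ⟨⟨b, hb⟩, fun h => hab (hau.trans h.symm)⟩
      · exact ⟨⟨a, ha⟩, hau⟩
    exact (hadj u c (Ne.symm hc)).reachable.trans (hadj c v (huv ▸ hc)).reachable
  · exact (hadj u v huv).reachable

lemma IsVertexCut.exists_eq_compl_singleton_prod_compl {S : Set (V × W)}
    (hS : IsVertexCut (lexProd (⊤ : SimpleGraph V) H) S) :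
    ∃ (i : V) (T : Set W), S = ({i} ×ˢ Tᶜ)ᶜ := by
  obtain ⟨i, hi⟩ : ∃ i, ∀ p ∉ S, p.1 = i := by
    rcases hS with ⟨⟨a, ha⟩, hdisc⟩ | ⟨v, hv⟩
    · exact ⟨a.1, fun p hp => by_contra fun h => hdisc (connected_induce_lexProd_top hp ha h)⟩
    · exact ⟨v.1, fun p hp => by rw [← Set.mem_compl_iff, hv] at hp; rw [hp]⟩
  refine ⟨i, {w | (i, w) ∈ S}, Set.ext fun ⟨a, b⟩ => ?_⟩
  by_cases hp : (a, b) ∈ S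
  · have : a = i → (i, b) ∈ S := by rintro rfl; exact hp
    simpa [hp] using this
  · obtain rfl : a = i := hi _ hp
    simp [hp]

end LexProd

lemma ncard_compl_singleton_prod_compl {V W : Type*} [Fintype V] [Fintype W] (i : V)
    (T : Set W) :
    (({i} ×ˢ Tᶜ)ᶜ : Set (V × W)).ncard = (Fintype.card V - 1) * Fintype.card W + T.ncard := by
  have hV : 1 ≤ Fintype.card V := Fintype.card_pos_iff.2 ⟨i⟩
  have hprod := Set.ncard_add_ncard_compl ({i} ×ˢ Tᶜ : Set (V × W))
  have hT := Set.ncard_add_ncard_compl T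
  rw [Set.ncard_prod, Set.ncard_singleton, one_mul, Nat.card_eq_fintype_card,
    Fintype.card_prod] at hprod
  rw [Nat.card_eq_fintype_card] at hT
  obtain ⟨k, hk⟩ : ∃ k, Fintype.card V = k + 1 := ⟨_, (Nat.sub_add_cancel hV).symm⟩
  rw [hk, add_one_mul] at hprod
  rw [hk, Nat.add_sub_cancel]
  omega

/-- κ(Kₙ∘G₂) = (n−1)·|V(G₂)| + κ(G₂). -/
theorem connectivity_lexProd_complete {W : Type*} [Fintype W] [Nonempty W]
    (n : ℕ) (hn : 1 ≤ n) (G₂ : SimpleGraph W) :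
    graphConnectivity (lexProd (⊤ : SimpleGraph (Fin n)) G₂)
      = (n - 1) * Fintype.card W + graphConnectivity G₂ := by
  have : Nonempty (Fin n) := ⟨⟨0, hn⟩⟩
  have hcard (i : Fin n) (T : Set W) :
      (({i} ×ˢ Tᶜ)ᶜ : Set (Fin n × W)).ncard = (n - 1) * Fintype.card W + T.ncard := by
    rw [ncard_compl_singleton_prod_compl, Fintype.card_fin]
  apply le_antisymm
  · obtain ⟨T, hT, hTcard⟩ := exists_isVertexCut_ncard_eq_graphConnectivity G₂
    calc graphConnectivity (lexProd ⊤ G₂) ≤ (({⟨0, hn⟩} ×ˢ Tᶜ)ᶜ : Set (Fin n × W)).ncard :=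
          graphConnectivity_le ((isVertexCut_lexProd_compl_singleton_prod_compl _ _ _ _).2 hT)
      _ = (n - 1) * Fintype.card W + graphConnectivity G₂ := by rw [hcard, hTcard]
  · refine le_graphConnectivity fun S hS => ?_
    obtain ⟨i, T, rfl⟩ := hS.exists_eq_compl_singleton_prod_compl
    have hT := graphConnectivity_le ((isVertexCut_lexProd_compl_singleton_prod_compl _ _ _ _).1 hS)
    rw [hcard]
    omega
end

section
/- Let G₁ be a finite connected graph that is not complete and let G₂ be a finite disconnected graph with no isolated vertices (|V₀(G₂)| = 0). Then the lexicographic product G₁∘G₂ is not super connected. -/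
/-!
Let `C` be a minimum vertex-cut of `G₁`; since `G₁` is not complete, `G₁ − C` is disconnected, so
`C × V(G₂)` is a vertex-cut of `G₁∘G₂`. It is a minimum one: for any vertex-cut `S` of `G₁∘G₂`,
the set `T` of vertices of `G₁` whose whole fibre lies in `S` is a vertex-cut of `G₁`, because
`G₁∘G₂ − S` is connected as soon as its projection `G₁ − T` is connected with two vertices;
hence `|S| ≥ |T| |V(G₂)| ≥ κ(G₁) |V(G₂)|`. But `G₁∘G₂ − C × V(G₂) = (G₁ − C)∘G₂`, and a vertex
`(x, y)` of it is adjacent to `(x, y')` for any neighbour `y'` of `y` in `G₂`.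
-/

section

variable {V W : Type*}

section VertexCut

variable {G : SimpleGraph V} {S C : Set V}

lemma graphConnectivity_le_ncard (h : IsVertexCut G S) : graphConnectivity G ≤ S.ncard :=
  Nat.sInf_le ⟨S, h, rfl⟩

lemma IsVertexCut.exists_isMinVertexCut (h : IsVertexCut G S) : ∃ C, IsMinVertexCut G C :=
  Nat.sInf_mem (s := {n | ∃ T : Set V, IsVertexCut G T ∧ T.ncard = n}) ⟨S.ncard, S, h, rfl⟩

lemma isMinVertexCut_of_forall_ncard_le (h : IsVertexCut G S)
    (hle : ∀ T, IsVertexCut G T → S.ncard ≤ T.ncard) : IsMinVertexCut G S := by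
  refine ⟨h, le_antisymm ?_ (graphConnectivity_le_ncard h)⟩
  refine le_csInf ⟨S.ncard, S, h, rfl⟩ ?_
  rintro _ ⟨T, hT, rfl⟩
  exact hle T hT

lemma isVertexCut_compl_pair {u v : V} (huv : u ≠ v) (hadj : ¬ G.Adj u v) :
    IsVertexCut G {u, v}ᶜ := by
  left
  refine ⟨⟨u, by simp⟩, fun hconn => ?_⟩
  rw [compl_compl] at hconn
  obtain ⟨w⟩ := hconn.preconnected ⟨u, by simp⟩ ⟨v, by simp⟩
  have hsnd : G.Adj u w.snd := w.adj_snd (w.not_nil_of_ne (by simpa using huv))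
  rcases w.snd.2 with h | h
  · exact G.ne_of_adj hsnd h.symm
  · exact hadj (h ▸ hsnd)

lemma exists_isMinVertexCut_of_ne_top (hG : G ≠ ⊤) : ∃ C, IsMinVertexCut G C := by
  obtain ⟨u, v, huv, hadj⟩ := G.ne_top_iff_exists_not_adj.mp hG
  exact (isVertexCut_compl_pair huv hadj).exists_isMinVertexCut

lemma graphConnectivity_add_two_le [Finite V] (hG : G ≠ ⊤) :
    graphConnectivity G + 2 ≤ Nat.card V := by
  obtain ⟨u, v, huv, hadj⟩ := G.ne_top_iff_exists_not_adj.mp hG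
  have hκ := graphConnectivity_le_ncard (isVertexCut_compl_pair huv hadj)
  have hsum := Set.ncard_add_ncard_compl ({u, v} : Set V)
  rw [Set.ncard_pair huv] at hsum
  omega

lemma IsMinVertexCut.compl_nonempty_and_not_connected [Finite V] (hG : G ≠ ⊤)
    (hC : IsMinVertexCut G C) : Cᶜ.Nonempty ∧ ¬ (G.induce Cᶜ).Connected := by
  refine hC.1.resolve_right ?_
  rintro ⟨v, hv⟩
  have hsum := Set.ncard_add_ncard_compl C
  rw [hv, Set.ncard_singleton, hC.2] at hsum
  have := graphConnectivity_add_two_le hG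
  omega

end VertexCut

lemma Set.ncard_preimage_fst (C : Set V) :
    (Prod.fst ⁻¹' C : Set (V × W)).ncard = C.ncard * Nat.card W := by
  rw [← Set.prod_univ, Set.ncard_prod, Set.ncard_univ]

section LexProd

variable (G₁ : SimpleGraph V) (G₂ : SimpleGraph W) {U : Set (V × W)}

lemma connected_induce_fst_image (h : ((lexProd G₁ G₂).induce U).Connected) :
    (G₁.induce (Prod.fst '' U)).Connected := by
  let proj : U → Prod.fst '' U := fun p => ⟨p.1.1, p.1, p.2, rfl⟩
  have hreach : ∀ p q, (G₁.induce (Prod.fst '' U)).Reachable (proj p) (proj q) := by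
    intro p q
    have hpq := (SimpleGraph.reachable_iff_reflTransGen p q).mp (h.preconnected p q)
    refine (SimpleGraph.reachable_iff_reflTransGen _ _).mpr
      (Relation.ReflTransGen.lift' proj (fun p q hadj => ?_) _ _ hpq)
    rcases hadj with hadj | ⟨heq, -⟩
    · exact Relation.ReflTransGen.single hadj
    · change Relation.ReflTransGen _ (proj p) (proj q)
      rw [show proj p = proj q from Subtype.ext heq]
  have : Nonempty U := h.nonempty
  refine SimpleGraph.Connected.mk ?_
  rintro ⟨_, p, hp, rfl⟩ ⟨_, q, hq, rfl⟩
  exact hreach ⟨p, hp⟩ ⟨q, hq⟩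

/-- An edge `xx'` of `G₁` joins every vertex of `U` over `x` to every one over `x'`, so paths of the
projection lift to `U`; two vertices over the same `x` are joined through a neighbour of `x`. -/
lemma connected_induce_of_connected_fst_image (h : (G₁.induce (Prod.fst '' U)).Connected)
    (hnt : (Prod.fst '' U).Nontrivial) : ((lexProd G₁ G₂).induce U).Connected := by
  have : Nontrivial (Prod.fst '' U) := hnt.coe_sort
  have lift_adj : ∀ (p r : U) (x y : V), p.1.1 = x → r.1.1 = y → G₁.Adj x y →
      ((lexProd G₁ G₂).induce U).Adj p r := by
    rintro p r _ _ rfl rfl hadj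
    exact Or.inl hadj
  have lift : ∀ {a b : Prod.fst '' U} (_ : (G₁.induce (Prod.fst '' U)).Walk a b) (p q : U),
      p.1.1 = a → q.1.1 = b → ((lexProd G₁ G₂).induce U).Reachable p q := by
    intro a b w
    induction w with
    | @nil a =>
      intro p q hp hq
      obtain ⟨c, hac⟩ := h.preconnected.exists_adj_of_nontrivial a
      obtain ⟨r, hr, hrc⟩ := c.2
      exact (lift_adj p ⟨r, hr⟩ _ _ hp hrc hac).reachable.trans
        (lift_adj ⟨r, hr⟩ q _ _ hrc hq hac.symm).reachable
    | @cons a c b hac _ ih =>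
      intro p q hp hq
      obtain ⟨r, hr, hrc⟩ := c.2
      exact (lift_adj p ⟨r, hr⟩ _ _ hp hrc hac).reachable.trans (ih ⟨r, hr⟩ q hrc hq)
  obtain ⟨a, p, hp, rfl⟩ := hnt.nonempty
  have : Nonempty U := ⟨⟨p, hp⟩⟩
  exact SimpleGraph.Connected.mk fun p q =>
    lift (h.preconnected ⟨p.1.1, p.1, p.2, rfl⟩ ⟨q.1.1, q.1, q.2, rfl⟩).some p q rfl rfl

lemma IsVertexCut.of_lexProd {S : Set (V × W)} (h : IsVertexCut (lexProd G₁ G₂) S) :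
    IsVertexCut G₁ (Prod.fst '' Sᶜ)ᶜ := by
  rw [IsVertexCut, compl_compl]
  rcases h with ⟨hne, hdis⟩ | ⟨p, hp⟩
  · rcases (hne.image Prod.fst).exists_eq_singleton_or_nontrivial with hsingle | hnt
    · exact Or.inr hsingle
    · exact Or.inl ⟨hne.image _, fun hconn =>
        hdis (connected_induce_of_connected_fst_image G₁ G₂ hconn hnt)⟩
  · exact Or.inr ⟨p.1, by rw [hp, Set.image_singleton]⟩

lemma graphConnectivity_mul_card_le_ncard [Finite V] [Finite W] {S : Set (V × W)}
    (h : IsVertexCut (lexProd G₁ G₂) S) : graphConnectivity G₁ * Nat.card W ≤ S.ncard :=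
  calc graphConnectivity G₁ * Nat.card W
      ≤ (Prod.fst '' Sᶜ)ᶜ.ncard * Nat.card W :=
        Nat.mul_le_mul_right _ (graphConnectivity_le_ncard (h.of_lexProd G₁ G₂))
    _ = (Prod.fst ⁻¹' (Prod.fst '' Sᶜ)ᶜ).ncard := (Set.ncard_preimage_fst _).symm
    _ ≤ S.ncard := Set.ncard_le_ncard fun p hp => by_contra fun hpS => hp ⟨p, hpS, rfl⟩

lemma isVertexCut_lexProd_preimage_fst [Nonempty W] {C : Set V} (hne : Cᶜ.Nonempty)
    (hdis : ¬ (G₁.induce Cᶜ).Connected) : IsVertexCut (lexProd G₁ G₂) (Prod.fst ⁻¹' C) := by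
  have himage : Prod.fst '' (Prod.fst ⁻¹' C : Set (V × W))ᶜ = Cᶜ := by
    rw [← Set.preimage_compl, Set.image_preimage_eq _ Prod.fst_surjective]
  refine Or.inl ⟨Set.Nonempty.of_image (himage ▸ hne), fun hconn => hdis ?_⟩
  rw [← himage]
  exact connected_induce_fst_image G₁ G₂ hconn

lemma IsMinVertexCut.lexProd_preimage_fst [Finite V] [Finite W] [Nonempty W] {C : Set V}
    (hG : G₁ ≠ ⊤) (hC : IsMinVertexCut G₁ C) :
    IsMinVertexCut (lexProd G₁ G₂) (Prod.fst ⁻¹' C) := by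
  obtain ⟨hne, hdis⟩ := hC.compl_nonempty_and_not_connected hG
  refine isMinVertexCut_of_forall_ncard_le
    (isVertexCut_lexProd_preimage_fst G₁ G₂ hne hdis) fun S hS => ?_
  rw [Set.ncard_preimage_fst, hC.2]
  exact graphConnectivity_mul_card_le_ncard G₁ G₂ hS

end LexProd

end

theorem not_superConnected_of_disconnected_general {V W : Type*} [Fintype V] [Fintype W] [Nonempty W]
    (G₁ : SimpleGraph V) (G₂ : SimpleGraph W)
    (hnc : G₁ ≠ ⊤)
    (hiso : isoSet G₂ = ∅) :
    ¬ SuperConnected (lexProd G₁ G₂) := by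
  intro hsuper
  obtain ⟨C, hC⟩ := exists_isMinVertexCut_of_ne_top hnc
  obtain ⟨⟨x, y⟩, hxy, hisolated⟩ := hsuper _ (hC.lexProd_preimage_fst G₁ G₂ hnc)
  obtain ⟨y', hyy'⟩ : ∃ y', G₂.Adj y y' := by
    by_contra! h
    exact (Set.eq_empty_iff_forall_notMem.mp hiso) y h
  exact hisolated (x, y') hxy (Or.inr ⟨rfl, hyy'⟩)

/-- If G₁ is connected and non-complete and G₂ is disconnected with no isolated
vertices, then G₁∘G₂ is not super connected. -/
theorem not_superConnected_of_disconnected {V W : Type*} [Fintype V] [Fintype W] [Nonempty W]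
    (G₁ : SimpleGraph V) (G₂ : SimpleGraph W)
    (hconn : G₁.Connected) (hnc : G₁ ≠ ⊤)
    (h₂ : ¬ G₂.Connected) (hiso : isoSet G₂ = ∅) :
    ¬ SuperConnected (lexProd G₁ G₂) :=
  not_superConnected_of_disconnected_general G₁ G₂ hnc hiso
end
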